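/- In B ⊗ ℤ[1/n], the element Z_n lies in the (Λ_n ⊗ ℤ[1/n])-subalgebra of B ⊗ ℤ[1/n] generated by the 3n − 1 elements X_1,…,X_n, Y_1,…,Y_n, Z_1,…,Z_{n−1}. -/

import Mathlib

open scoped BigOperators

set_option synthInstance.maxHeartbeats 1000000
set_option maxHeartbeats 1000000

noncomputable section

variable (R : Type) [CommRing R] (n : ℕ)

/-- The polynomial ring `R[t_1, …, t_n]`. -/
abbrev Pn := MvPolynomial (Fin n) R

/-- `B`: the exterior algebra over `Pn` on the `2n` generators `u_1,…,u_n,v_1,…,v_n`. -/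
abbrev Bn := ExteriorAlgebra (Pn R n) ((Fin n ⊕ Fin n) → Pn R n)

/-- The variable `t_i`. -/
def tv (i : Fin n) : Pn R n := MvPolynomial.X i

/-- The exterior generator `u_i`. -/
def uu (i : Fin n) : Bn R n := ExteriorAlgebra.ι (Pn R n) (Pi.single (Sum.inl i) 1)

/-- The exterior generator `v_i`. -/
def vv (i : Fin n) : Bn R n := ExteriorAlgebra.ι (Pn R n) (Pi.single (Sum.inr i) 1)

/-- `X_l = ∑ t_i^(l-1) u_i` (indices `i` run over `Fin n`, `l ≥ 1`). -/
def Xel (l : ℕ) : Bn R n :=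
  ∑ i : Fin n, algebraMap (Pn R n) (Bn R n) (tv R n i ^ (l - 1)) * uu R n i

/-- `Y_l = ∑ t_i^(l-1) v_i`. -/
def Yel (l : ℕ) : Bn R n :=
  ∑ i : Fin n, algebraMap (Pn R n) (Bn R n) (tv R n i ^ (l - 1)) * vv R n i

/-- `X_I`, the product of the `X_{i+1}` for `i ∈ I`, in increasing order. -/
def XI (I : Finset (Fin n)) : Bn R n := ((I.sort (· ≤ ·)).map fun i => Xel R n (i.1 + 1)).prod

/-- `Y_I`, the product of the `Y_{i+1}` for `i ∈ I`, in increasing order. -/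
def YI (I : Finset (Fin n)) : Bn R n := ((I.sort (· ≤ ·)).map fun i => Yel R n (i.1 + 1)).prod

/-- `(1 + p s)⁻¹ = ∑ (-p)^k s^k`, the inverse of `1 + p s` in `Pn[[s]]`. -/
def invOnePlus (p : Pn R n) : PowerSeries (Pn R n) := PowerSeries.mk fun k => (-p) ^ k

/-- The `i`-th factor `1 + s u_i v_i (1 + t_i s)⁻¹` of the power series defining the `Z_l`. -/
def Zfactor (i : Fin n) : PowerSeries (Bn R n) :=
  1 + PowerSeries.C (uu R n i * vv R n i) *
    PowerSeries.map (algebraMap (Pn R n) (Bn R n)) (PowerSeries.X * invOnePlus R n (tv R n i))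

/-- The power series `∏_{i=1}^n (1 + s u_i v_i (1 + t_i s)⁻¹) ∈ B[[s]]`. -/
def Zseries : PowerSeries (Bn R n) := ((List.finRange n).map (Zfactor R n)).prod

/-- `Z_l`, the coefficient of `s^l` in `Zseries`. -/
def Zel (l : ℕ) : Bn R n := PowerSeries.coeff l (Zseries R n)

/-- The Vandermonde matrix `V = (t_j^(i-1))`. -/
def Vmat : Matrix (Fin n) (Fin n) (Pn R n) := Matrix.of fun i j => tv R n j ^ (i : ℕ)

/-- The Vandermonde determinant `Δ = det V = ∏_{i<j} (t_j - t_i)`. -/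
def Dl : Pn R n := (Vmat R n).det


/-- The coefficient ring `ℤ[1/n]`. -/
abbrev ZInv (n : ℕ) : Type := Localization.Away (n : ℤ)

/-!
Each `u_i v_i` is central with square zero, so `Z(s) = ∏ (1 + u_i v_i s (1 + t_i s)⁻¹)` lives
in the commutative ring `center B`, where its logarithmic derivative is
`G(s) = ∑ u_i v_i (1 + t_i s)⁻²`, i.e. `Z' = G Z`. Comparing coefficients gives
`(m + 1) Z_{m+1} = ∑_{p+q=m} G_p Z_q`, which expresses `G_0, …, G_{n-2}` through
`Z_1, …, Z_{n-1}` and `n Z_n` through `G_0, …, G_{n-1}`. The missing `G_{n-1}` comes from the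
`X, Y`: the `-t_i` are the roots of `∏ (x + t_k) = ∑ e_c x^{n-c}`, so the divided differences
of this polynomial vanish at the pairs `(-t_i, -t_j)` with `i ≠ j`, and hence `∑_c e_c G_{n-1-c}`
is a `Λ_n`-combination of the products `X_a Y_b`. Finally `n` is inverted.
-/

open PowerSeries Finset

namespace ExteriorAlgebra

variable {K M : Type*} [CommRing K] [AddCommGroup M] [Module K M]

theorem ι_mul_ι_mem_center (a b : M) :
    ι K a * ι K b ∈ Subalgebra.center K (ExteriorAlgebra K M) := by
  rw [Subalgebra.mem_center_iff]
  intro z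
  induction z using ExteriorAlgebra.induction with
  | algebraMap r => exact Algebra.commutes r _
  | ι m =>
    have hm (x : M) : ι K m * ι K x = -(ι K x * ι K m) :=
      eq_neg_of_add_eq_zero_left (ι_add_mul_swap m x)
    rw [← mul_assoc, hm, neg_mul, mul_assoc, hm, mul_neg, neg_neg, mul_assoc]
  | mul x y hx hy => rw [mul_assoc, hy, ← mul_assoc, hx, mul_assoc]
  | add x y hx hy => rw [add_mul, mul_add, hx, hy]

theorem ι_mul_ι_mul_self (a b : M) : ι K a * ι K b * (ι K a * ι K b) = 0 := by
  have hba : ι K b * ι K a = -(ι K a * ι K b) :=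
    eq_neg_of_add_eq_zero_left (ι_add_mul_swap b a)
  rw [← mul_assoc, mul_assoc (ι K a), hba, mul_neg, ← mul_assoc, ι_sq_zero, zero_mul, neg_zero,
    zero_mul]

end ExteriorAlgebra

namespace PowerSeries

variable {S ι : Type*} [CommRing S]

theorem derivative_prod_one_add_C_mul (s : Finset ι) (a : ι → S) (h : ι → S⟦X⟧)
    (ha : ∀ i ∈ s, a i * a i = 0) :
    d⁄dX S (∏ i ∈ s, (1 + C (a i) * h i)) =
      (∑ i ∈ s, C (a i) * d⁄dX S (h i)) * ∏ i ∈ s, (1 + C (a i) * h i) := by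
  classical
  induction s using Finset.induction_on with
  | empty => simp
  | insert j s hj ih =>
    rw [prod_insert hj, sum_insert hj, Derivation.leibniz,
      ih fun i hi => ha i (mem_insert_of_mem hi)]
    have hsq : C (a j) * C (a j) = 0 := by rw [← map_mul, ha j (mem_insert_self j s), map_zero]
    simp only [map_add, Derivation.leibniz, Derivation.map_one_eq_zero, derivative_C, smul_eq_mul]
    linear_combination -(h j * d⁄dX S (h j) * ∏ i ∈ s, (1 + C (a i) * h i)) * hsq

theorem coeff_derivative_X_mul_mk (p : S) (k : ℕ) :
    coeff k (d⁄dX S (X * mk fun k => p ^ k)) = (k + 1) * p ^ k := by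
  rw [coeff_derivative, coeff_succ_X_mul, coeff_mk, mul_comm]

end PowerSeries

section AntidiagonalPowers

variable {K : Type*} [CommRing K]

theorem sum_antidiagonal_pow_mul_pow_mul_sub (x y : K) (m : ℕ) :
    (∑ p ∈ antidiagonal m, x ^ p.1 * y ^ p.2) * (x - y) = x ^ (m + 1) - y ^ (m + 1) := by
  rw [Nat.sum_antidiagonal_eq_sum_range_succ_mk, ← geom_sum₂_mul]
  simp

theorem sum_antidiagonal_pow_mul_pow_self (x : K) (m : ℕ) :
    ∑ p ∈ antidiagonal m, x ^ p.1 * x ^ p.2 = (m + 1) * x ^ m := by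
  rw [sum_congr rfl fun p hp => by rw [← pow_add, mem_antidiagonal.mp hp], sum_const,
    Nat.card_antidiagonal, nsmul_eq_mul, Nat.cast_succ]

theorem sum_antidiagonal_neg_pow_mul_neg_pow (x y : K) (m : ℕ) :
    ∑ p ∈ antidiagonal m, (-x) ^ p.1 * (-y) ^ p.2 =
      (-1) ^ m * ∑ p ∈ antidiagonal m, x ^ p.1 * y ^ p.2 := by
  rw [mul_sum]
  refine sum_congr rfl fun p hp => ?_
  rw [← mem_antidiagonal.mp hp, neg_pow x, neg_pow y, pow_add]
  ring

end AntidiagonalPowers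

section Recursion

local notation "𝒵" => Subalgebra.center (Pn R n) (Bn R n)

def uvCenter (i : Fin n) : 𝒵 :=
  ⟨uu R n i * vv R n i, ExteriorAlgebra.ι_mul_ι_mem_center _ _⟩

def xInvOnePlusCenter (i : Fin n) : PowerSeries 𝒵 :=
  X * PowerSeries.mk fun k => algebraMap (Pn R n) 𝒵 (-tv R n i) ^ k

def zCenter : PowerSeries 𝒵 := ∏ i, (1 + C (uvCenter R n i) * xInvOnePlusCenter R n i)

/-- `∑ G_k s^k = ∑ u_i v_i (1 + t_i s)⁻²` is the logarithmic derivative of `Zseries`. -/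
def Gel (k : ℕ) : Bn R n :=
  ∑ i : Fin n, ((k + 1) * (-tv R n i) ^ k) • (uu R n i * vv R n i)

def gCenter : PowerSeries 𝒵 := ∑ i, C (uvCenter R n i) * d⁄dX 𝒵 (xInvOnePlusCenter R n i)

variable {R n}

theorem uvCenter_mul_self (i : Fin n) : uvCenter R n i * uvCenter R n i = 0 :=
  Subtype.ext (ExteriorAlgebra.ι_mul_ι_mul_self _ _)

theorem Zseries_eq_map_zCenter : Zseries R n = map (𝒵).val.toRingHom (zCenter R n) := by
  rw [zCenter, Fin.prod_univ_def, map_list_prod, List.map_map, Zseries]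
  congr 1
  refine List.map_congr_left fun i _ => ?_
  ext k
  rcases k with _ | k
  · simp [Zfactor, xInvOnePlusCenter]
  · simp [Zfactor, invOnePlus, xInvOnePlusCenter, coeff_succ_X_mul, uvCenter, mul_assoc]

theorem Zel_eq_coeff_zCenter (l : ℕ) :
    Zel R n l = ((coeff l (zCenter R n) : 𝒵) : Bn R n) := by
  rw [Zel, Zseries_eq_map_zCenter, coeff_map]
  rfl

theorem Zel_zero : Zel R n 0 = 1 := by
  simp [Zel_eq_coeff_zCenter, zCenter, xInvOnePlusCenter]

theorem derivative_zCenter : d⁄dX 𝒵 (zCenter R n) = gCenter R n * zCenter R n :=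
  derivative_prod_one_add_C_mul _ _ _ fun i _ => uvCenter_mul_self i

theorem coeff_gCenter (k : ℕ) : ((coeff k (gCenter R n) : 𝒵) : Bn R n) = Gel R n k := by
  simp only [gCenter, xInvOnePlusCenter, map_sum, coeff_C_mul, coeff_derivative_X_mul_mk,
    AddSubmonoidClass.coe_finsetSum, Gel]
  refine Finset.sum_congr rfl fun i _ => ?_
  rw [mul_comm, Algebra.smul_def]
  simp [uvCenter]

theorem nsmul_Zel_succ (m : ℕ) :
    (m + 1) • Zel R n (m + 1) = ∑ p ∈ antidiagonal m, Gel R n p.1 * Zel R n p.2 := by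
  have h := congrArg (fun f => ((coeff m f : 𝒵) : Bn R n))
    (derivative_zCenter (R := R) (n := n))
  simp only [coeff_derivative, coeff_mul, AddSubmonoidClass.coe_finsetSum, Subalgebra.coe_mul,
    coeff_gCenter, ← Zel_eq_coeff_zCenter] at h
  rw [← h, nsmul_eq_mul, Nat.cast_comm]
  norm_cast

end Recursion

/-- The divided difference `(g x - g y) / (x - y)` of `g = ∑ e_c X^(n-c) = ∏ (X + t_k)`. -/
def esymmDivDiff (x y : Pn R n) : Pn R n :=
  ∑ c ∈ range n,
    MvPolynomial.esymm (Fin n) R c * ∑ p ∈ antidiagonal (n - 1 - c), x ^ p.1 * y ^ p.2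

section Identity

variable {R n}

theorem esymmDivDiff_mul_sub (x y : Pn R n) :
    esymmDivDiff R n x y * (x - y) =
      ∑ c ∈ range (n + 1), MvPolynomial.esymm (Fin n) R c * x ^ (n - c) -
        ∑ c ∈ range (n + 1), MvPolynomial.esymm (Fin n) R c * y ^ (n - c) := by
  rw [esymmDivDiff, sum_mul, sum_range_succ, sum_range_succ, Nat.sub_self, pow_zero, pow_zero,
    add_sub_add_right_eq_sub, ← sum_sub_distrib]
  refine sum_congr rfl fun c hc => ?_
  rw [mul_assoc, sum_antidiagonal_pow_mul_pow_mul_sub, mul_sub,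
    show n - 1 - c + 1 = n - c by have := mem_range.mp hc; omega]

theorem sum_esymm_mul_neg_tv_pow (i : Fin n) :
    ∑ c ∈ range (n + 1), MvPolynomial.esymm (Fin n) R c * (-tv R n i) ^ (n - c) = 0 := by
  have h := congrArg (Polynomial.eval (-tv R n i))
    (MvPolynomial.prod_C_add_X_eq_sum_esymm R (Fin n))
  simp only [Polynomial.eval_prod, Polynomial.eval_add, Polynomial.eval_X, Polynomial.eval_C,
    Polynomial.eval_finsetSum, Polynomial.eval_mul, Polynomial.eval_pow, Fintype.card_fin] at h
  rw [← h]
  exact prod_eq_zero (mem_univ i) (neg_add_cancel _)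

theorem esymmDivDiff_neg_tv_of_ne [IsDomain R] {i j : Fin n} (hij : i ≠ j) :
    esymmDivDiff R n (-tv R n i) (-tv R n j) = 0 := by
  have hsub : -tv R n i - -tv R n j ≠ 0 := by
    rw [neg_sub_neg, sub_ne_zero]
    exact fun h => hij (MvPolynomial.X_injective h).symm
  refine (mul_eq_zero.mp ?_).resolve_right hsub
  rw [esymmDivDiff_mul_sub, sum_esymm_mul_neg_tv_pow, sum_esymm_mul_neg_tv_pow, sub_zero]

theorem sum_Xel_mul_Yel (m : ℕ) :
    ∑ p ∈ antidiagonal m, Xel R n (p.1 + 1) * Yel R n (p.2 + 1) =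
      ∑ i, ∑ j, (∑ p ∈ antidiagonal m, tv R n i ^ p.1 * tv R n j ^ p.2) •
        (uu R n i * vv R n j) := by
  simp only [Xel, Yel, Nat.add_sub_cancel, sum_mul_sum, ← Algebra.smul_def, smul_mul_smul_comm,
    sum_smul]
  rw [sum_comm]
  exact sum_congr rfl fun i _ => sum_comm

theorem sum_esymm_smul_Gel :
    ∑ c ∈ range n, MvPolynomial.esymm (Fin n) R c • Gel R n (n - 1 - c) =
      ∑ i, esymmDivDiff R n (-tv R n i) (-tv R n i) • (uu R n i * vv R n i) := by
  simp only [Gel, smul_sum, smul_smul]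
  rw [sum_comm]
  refine sum_congr rfl fun i _ => ?_
  simp only [← sum_smul, esymmDivDiff, sum_antidiagonal_pow_mul_pow_self]

theorem sum_esymm_smul_sum_Xel_mul_Yel :
    ∑ c ∈ range n, ((-1) ^ (n - 1 - c) * MvPolynomial.esymm (Fin n) R c) •
        ∑ p ∈ antidiagonal (n - 1 - c), Xel R n (p.1 + 1) * Yel R n (p.2 + 1) =
      ∑ i, ∑ j, esymmDivDiff R n (-tv R n i) (-tv R n j) • (uu R n i * vv R n j) := by
  simp only [sum_Xel_mul_Yel, smul_sum, smul_smul]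
  rw [sum_comm]
  refine sum_congr rfl fun i _ => ?_
  rw [sum_comm]
  refine sum_congr rfl fun j _ => ?_
  simp only [← sum_smul, esymmDivDiff, sum_antidiagonal_neg_pow_mul_neg_pow]
  congr 1
  exact sum_congr rfl fun c _ => by ring

theorem sum_esymm_smul_Gel_eq [IsDomain R] :
    ∑ c ∈ range n, MvPolynomial.esymm (Fin n) R c • Gel R n (n - 1 - c) =
      ∑ c ∈ range n, ((-1) ^ (n - 1 - c) * MvPolynomial.esymm (Fin n) R c) •
        ∑ p ∈ antidiagonal (n - 1 - c), Xel R n (p.1 + 1) * Yel R n (p.2 + 1) := by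
  rw [sum_esymm_smul_Gel, sum_esymm_smul_sum_Xel_mul_Yel]
  refine sum_congr rfl fun i _ => ?_
  rw [Fintype.sum_eq_single i fun j hji => by rw [esymmDivDiff_neg_tv_of_ne hji.symm, zero_smul]]

end Identity

section Membership

local notation "Λ" => MvPolynomial.symmetricSubalgebra (Fin n) R

def adjoinXYZ : Subalgebra Λ (Bn R n) :=
  Algebra.adjoin Λ
    {x : Bn R n |
      (∃ l, 1 ≤ l ∧ l ≤ n ∧ (x = Xel R n l ∨ x = Yel R n l)) ∨
      (∃ l, 1 ≤ l ∧ l < n ∧ x = Zel R n l)}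

variable {R n}

theorem smul_mem_adjoinXYZ {p : Pn R n} (hp : p ∈ Λ) {x : Bn R n} (hx : x ∈ adjoinXYZ R n) :
    p • x ∈ adjoinXYZ R n :=
  Subalgebra.smul_mem _ hx (⟨p, hp⟩ : Λ)

theorem esymm_mem_symmetricSubalgebra (c : ℕ) : MvPolynomial.esymm (Fin n) R c ∈ Λ :=
  (MvPolynomial.mem_symmetricSubalgebra _).2 (MvPolynomial.esymm_isSymmetric _ _ _)

theorem Xel_mem_adjoinXYZ {l : ℕ} (h1 : 1 ≤ l) (h2 : l ≤ n) : Xel R n l ∈ adjoinXYZ R n :=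
  Algebra.subset_adjoin (Or.inl ⟨l, h1, h2, Or.inl rfl⟩)

theorem Yel_mem_adjoinXYZ {l : ℕ} (h1 : 1 ≤ l) (h2 : l ≤ n) : Yel R n l ∈ adjoinXYZ R n :=
  Algebra.subset_adjoin (Or.inl ⟨l, h1, h2, Or.inr rfl⟩)

theorem Zel_mem_adjoinXYZ {l : ℕ} (hl : l < n) : Zel R n l ∈ adjoinXYZ R n := by
  rcases Nat.eq_zero_or_pos l with rfl | h1
  · rw [Zel_zero]
    exact one_mem _
  · exact Algebra.subset_adjoin (Or.inr ⟨l, h1, hl, rfl⟩)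

theorem Gel_mem_adjoinXYZ_of_lt {k : ℕ} (hk : k + 1 < n)
    (ih : ∀ j < k, Gel R n j ∈ adjoinXYZ R n) : Gel R n k ∈ adjoinXYZ R n := by
  have hrec := nsmul_Zel_succ (R := R) (n := n) k
  rw [← add_sum_erase _ _ (show (k, 0) ∈ antidiagonal k by simp), Zel_zero, mul_one] at hrec
  rw [eq_sub_of_add_eq hrec.symm]
  refine sub_mem (nsmul_mem (Zel_mem_adjoinXYZ hk) _) (sum_mem fun p hp => ?_)
  obtain ⟨hpk, hp⟩ := mem_erase.mp hp
  have hsum := mem_antidiagonal.mp hp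
  have hp2 : p.2 ≠ 0 := fun h => hpk (Prod.ext (by omega) h)
  exact mul_mem (ih _ (by omega)) (Zel_mem_adjoinXYZ (by omega))

theorem Gel_pred_mem_adjoinXYZ [IsDomain R] (ih : ∀ j < n - 1, Gel R n j ∈ adjoinXYZ R n) :
    Gel R n (n - 1) ∈ adjoinXYZ R n := by
  rcases n with _ | m
  · simp [Gel]
  have hid := sum_esymm_smul_Gel_eq (R := R) (n := m + 1)
  rw [sum_range_succ', MvPolynomial.esymm_zero, one_smul, Nat.sub_zero] at hid
  rw [eq_sub_of_add_eq' hid]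
  refine sub_mem (sum_mem fun c hc => ?_) (sum_mem fun c hc => ?_)
  · refine smul_mem_adjoinXYZ (mul_mem (pow_mem (neg_mem (one_mem _)) _)
      (esymm_mem_symmetricSubalgebra c)) (sum_mem fun p hp => ?_)
    have := mem_antidiagonal.mp hp
    have := mem_range.mp hc
    exact mul_mem (Xel_mem_adjoinXYZ (by omega) (by omega))
      (Yel_mem_adjoinXYZ (by omega) (by omega))
  · have := mem_range.mp hc
    exact smul_mem_adjoinXYZ (esymm_mem_symmetricSubalgebra _) (ih _ (by omega))

theorem Gel_mem_adjoinXYZ [IsDomain R] {k : ℕ} (hk : k < n) : Gel R n k ∈ adjoinXYZ R n := by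
  induction k using Nat.strong_induction_on with
  | _ k ih =>
    by_cases hk1 : k + 1 < n
    · exact Gel_mem_adjoinXYZ_of_lt hk1 fun j hj => ih j hj (by omega)
    · obtain rfl : k = n - 1 := by omega
      exact Gel_pred_mem_adjoinXYZ fun j hj => ih j hj (by omega)

theorem nsmul_Zel_self_mem_adjoinXYZ [IsDomain R] : n • Zel R n n ∈ adjoinXYZ R n := by
  rcases n with _ | m
  · rw [zero_smul]
    exact zero_mem _
  rw [nsmul_Zel_succ]
  refine sum_mem fun p hp => ?_
  have := mem_antidiagonal.mp hp
  exact mul_mem (Gel_mem_adjoinXYZ (by omega)) (Zel_mem_adjoinXYZ (by omega))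

theorem Zel_self_mem_adjoinXYZ [IsDomain R] (h : IsUnit (n : R)) : Zel R n n ∈ adjoinXYZ R n := by
  obtain ⟨u, hu⟩ := h
  have hinv : (MvPolynomial.C (↑u⁻¹ : R) : Pn R n) • n • Zel R n n = Zel R n n := by
    rw [← Nat.cast_smul_eq_nsmul (Pn R n), smul_smul, ← map_natCast MvPolynomial.C, ← map_mul, ← hu,
      Units.inv_mul, map_one, one_smul]
  rw [← hinv]
  exact smul_mem_adjoinXYZ (Subalgebra.algebraMap_mem _ _) nsmul_Zel_self_mem_adjoinXYZ

end Membership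

/-- In `B ⊗ ℤ[1/n]`, the element `Z_n` lies in the `(Λ_n ⊗ ℤ[1/n])`-subalgebra generated by
the `3n - 1` elements `X_1,…,X_n, Y_1,…,Y_n, Z_1,…,Z_{n-1}`. -/
theorem Zn_mem_adjoin_of_invertible_n (n : ℕ) (hn : 1 ≤ n) :
    Zel (ZInv n) n n ∈
      Algebra.adjoin ↥(MvPolynomial.symmetricSubalgebra (Fin n) (ZInv n))
        {x : Bn (ZInv n) n |
          (∃ l, 1 ≤ l ∧ l ≤ n ∧ (x = Xel (ZInv n) n l ∨ x = Yel (ZInv n) n l)) ∨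
          (∃ l, 1 ≤ l ∧ l < n ∧ x = Zel (ZInv n) n l)} := by
  have : IsDomain (ZInv n) := IsLocalization.isDomain_localization
    (powers_le_nonZeroDivisors_of_noZeroDivisors (by exact_mod_cast Nat.one_le_iff_ne_zero.mp hn))
  have hunit := IsLocalization.Away.algebraMap_isUnit (S := ZInv n) (n : ℤ)
  rw [map_natCast] at hunit
  exact Zel_self_mem_adjoinXYZ hunit

end
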